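/- arXiv:1603.09049 — 11 statements merged into one kernel-verified Lean document; each statement's English description precedes it below -/
import Mathlib

section
/- In the policy-iteration setup, the Bellman system has at most one solution: if U, V : Fin n → ℝ admit policies p and q that are greedy for U and for V respectively and that satisfy A(p).mulVec U + B(p) = 0 and A(q).mulVec V + B(q) = 0, then U = V. -/
lemma mmatrix_nonneg_of_mulVec_nonneg {n : ℕ} (M : Matrix (Fin n) (Fin n) ℝ)
    (hM : IsUnit M) (hinv : ∀ i j, 0 ≤ M⁻¹ i j) (w : Fin n → ℝ)
    (hw : ∀ i, 0 ≤ M.mulVec w i) : ∀ i, 0 ≤ w i := by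
  intro i
  have h : w = M⁻¹.mulVec (M.mulVec w) := by
    rw [Matrix.mulVec_mulVec,
      Matrix.nonsing_inv_mul M ((Matrix.isUnit_iff_isUnit_det M).mp hM),
      Matrix.one_mulVec]
  rw [h]
  simp only [Matrix.mulVec, dotProduct]
  exact Finset.sum_nonneg fun j _ => mul_nonneg (hinv i j) (hw j)

/-- Policy-iteration setup: uniqueness of the solution of the Bellman system.
If `U` and `V` admit greedy policies `p`, `q` solving the corresponding linear
systems, then `U = V`. -/
theorem bellman_system_uniqueness
    (n : ℕ) (hn : 1 ≤ n) (C : Type*) [Fintype C] [Nonempty C]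
    (a : Fin n → C → Fin n → ℝ) (b : Fin n → C → ℝ)
    (hMmat : ∀ p : Fin n → C,
      IsUnit (Matrix.of fun i j => a i (p i) j) ∧
      ∀ i j, 0 ≤ (Matrix.of fun i j => a i (p i) j)⁻¹ i j)
    (U V : Fin n → ℝ) (p q : Fin n → C)
    (hgp : ∀ (i : Fin n) (c : C),
      (∑ j, a i (p i) j * U j) + b i (p i) ≤ (∑ j, a i c j * U j) + b i c)
    (hgq : ∀ (i : Fin n) (c : C),
      (∑ j, a i (q i) j * V j) + b i (q i) ≤ (∑ j, a i c j * V j) + b i c)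
    (hU : (Matrix.of fun i j => a i (p i) j).mulVec U + (fun i => b i (p i)) = 0)
    (hV : (Matrix.of fun i j => a i (q i) j).mulVec V + (fun i => b i (q i)) = 0) :
    U = V := by
  have hUi : ∀ i, (∑ j, a i (p i) j * U j) + b i (p i) = 0 := by
    intro i
    have := congrFun hU i
    simpa [Matrix.mulVec, dotProduct] using this
  have hVi : ∀ i, (∑ j, a i (q i) j * V j) + b i (q i) = 0 := by
    intro i
    have := congrFun hV i
    simpa [Matrix.mulVec, dotProduct] using this
  -- U - V ≥ 0 using matrix A(q)
  have h1 : ∀ i, 0 ≤ (Matrix.of fun i j => a i (q i) j).mulVec (U - V) i := by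
    intro i
    have hg := hgp i (q i)
    rw [hUi i] at hg
    have : (Matrix.of fun i j => a i (q i) j).mulVec (U - V) i
        = ((∑ j, a i (q i) j * U j) + b i (q i))
          - ((∑ j, a i (q i) j * V j) + b i (q i)) := by
      simp [Matrix.mulVec, dotProduct, mul_sub, Finset.sum_sub_distrib]
    rw [this, hVi i]
    linarith
  -- V - U ≥ 0 using matrix A(p)
  have h2 : ∀ i, 0 ≤ (Matrix.of fun i j => a i (p i) j).mulVec (V - U) i := by
    intro i
    have hg := hgq i (p i)
    rw [hVi i] at hg
    have : (Matrix.of fun i j => a i (p i) j).mulVec (V - U) i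
        = ((∑ j, a i (p i) j * V j) + b i (p i))
          - ((∑ j, a i (p i) j * U j) + b i (p i)) := by
      simp [Matrix.mulVec, dotProduct, mul_sub, Finset.sum_sub_distrib]
    rw [this, hUi i]
    linarith
  have hUV := mmatrix_nonneg_of_mulVec_nonneg _ (hMmat q).1 (hMmat q).2 _ h1
  have hVU := mmatrix_nonneg_of_mulVec_nonneg _ (hMmat p).1 (hMmat p).2 _ h2
  funext i
  have := hUV i
  have := hVU i
  simp only [Pi.sub_apply] at *
  linarith
end

section
/- In the policy-iteration setup, every policy-iteration sequence is entrywise nondecreasing from index 1: for every q ∈ ℕ and every i ∈ Fin n, U^{q+1} i ≤ U^{q+2} i. -/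
/-- Policy-iteration setup: every policy-iteration sequence is entrywise
nondecreasing from index 1. -/
theorem policy_iteration_nondecreasing
    (n : ℕ) (hn : 1 ≤ n) (C : Type*) [Fintype C] [Nonempty C]
    (a : Fin n → C → Fin n → ℝ) (b : Fin n → C → ℝ)
    (hMmat : ∀ p : Fin n → C,
      IsUnit (Matrix.of fun i j => a i (p i) j) ∧
      ∀ i j, 0 ≤ (Matrix.of fun i j => a i (p i) j)⁻¹ i j)
    (U : ℕ → Fin n → ℝ) (p : ℕ → Fin n → C)
    (hgreedy : ∀ (q : ℕ) (i : Fin n) (c : C),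
      (∑ j, a i (p q i) j * U q j) + b i (p q i) ≤ (∑ j, a i c j * U q j) + b i c)
    (hstep : ∀ q : ℕ,
      (Matrix.of fun i j => a i (p q i) j).mulVec (U (q + 1))
        + (fun i => b i (p q i)) = 0) :
    ∀ (q : ℕ) (i : Fin n), U (q + 1) i ≤ U (q + 2) i := by
  intro q i
  set A : Matrix (Fin n) (Fin n) ℝ := Matrix.of fun i j => a i (p (q + 1) i) j with hA
  set w : Fin n → ℝ := U (q + 1) - U (q + 2) with hw
  -- Each entry of A.mulVec w is ≤ 0
  have hAw : ∀ k, A.mulVec w k ≤ 0 := by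
    intro k
    have h1 := congrFun (hstep q) k
    have h2 := congrFun (hstep (q + 1)) k
    simp only [Pi.add_apply, Pi.zero_apply] at h1 h2
    have hg := hgreedy (q + 1) k (p q k)
    have e1 : (Matrix.of fun i j => a i (p q i) j).mulVec (U (q + 1)) k
        = ∑ j, a k (p q k) j * U (q + 1) j := by
      simp [Matrix.mulVec, dotProduct]
    have e2 : A.mulVec (U (q + 1)) k = ∑ j, a k (p (q + 1) k) j * U (q + 1) j := by
      simp [hA, Matrix.mulVec, dotProduct]
    have key : A.mulVec (U (q + 1)) k + b k (p (q + 1) k) ≤ 0 := by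
      rw [e2]
      calc (∑ j, a k (p (q + 1) k) j * U (q + 1) j) + b k (p (q + 1) k)
          ≤ (∑ j, a k (p q k) j * U (q + 1) j) + b k (p q k) := hg
        _ = 0 := by rw [← e1]; linarith
    have hAw2 : A.mulVec (U (q + 2)) k + b k (p (q + 1) k) = 0 := h2
    have : A.mulVec w k = A.mulVec (U (q + 1)) k - A.mulVec (U (q + 2)) k := by
      rw [hw, Matrix.mulVec_sub]; simp
    linarith [this, key, hAw2]
  -- invert
  obtain ⟨hUnit, hInv⟩ := hMmat (p (q + 1))
  have hdet : IsUnit A.det := (Matrix.isUnit_iff_isUnit_det A).mp hUnit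
  have hrec : A⁻¹.mulVec (A.mulVec w) = w := by
    rw [Matrix.mulVec_mulVec, Matrix.nonsing_inv_mul A hdet, Matrix.one_mulVec]
  have hwle : w i ≤ 0 := by
    rw [← hrec]
    have : A⁻¹.mulVec (A.mulVec w) i = ∑ j, A⁻¹ i j * A.mulVec w j := by
      simp [Matrix.mulVec, dotProduct]
    rw [this]
    apply Finset.sum_nonpos
    intro j _
    exact mul_nonpos_of_nonneg_of_nonpos (hInv i j) (hAw j)
  have : U (q + 1) i - U (q + 2) i ≤ 0 := hwle
  linarith
end

section
/- In the policy-iteration setup, the iterates of any policy-iteration sequence are uniformly bounded: there exists K ∈ ℝ such that for all q ≥ 1 and all i ∈ Fin n, |U^q i| ≤ K. -/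
/-- Policy-iteration setup: the iterates of any policy-iteration sequence are
uniformly bounded. -/
theorem policy_iteration_bounded
    (n : ℕ) (hn : 1 ≤ n) (C : Type*) [Fintype C] [Nonempty C]
    (a : Fin n → C → Fin n → ℝ) (b : Fin n → C → ℝ)
    (hMmat : ∀ p : Fin n → C,
      IsUnit (Matrix.of fun i j => a i (p i) j) ∧
      ∀ i j, 0 ≤ (Matrix.of fun i j => a i (p i) j)⁻¹ i j)
    (U : ℕ → Fin n → ℝ) (p : ℕ → Fin n → C)
    (hgreedy : ∀ (q : ℕ) (i : Fin n) (c : C),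
      (∑ j, a i (p q i) j * U q j) + b i (p q i) ≤ (∑ j, a i c j * U q j) + b i c)
    (hstep : ∀ q : ℕ,
      (Matrix.of fun i j => a i (p q i) j).mulVec (U (q + 1))
        + (fun i => b i (p q i)) = 0) :
    ∃ K : ℝ, ∀ q : ℕ, 1 ≤ q → ∀ i : Fin n, |U q i| ≤ K := by
  haveI : NeZero n := ⟨Nat.one_le_iff_ne_zero.mp hn⟩
  set V : (Fin n → C) → Fin n → ℝ :=
    fun P => (Matrix.of fun i j => a i (P i) j)⁻¹.mulVec (fun i => -(b i (P i))) with hV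
  refine ⟨Finset.univ.sup' Finset.univ_nonempty
    (fun P : Fin n → C => Finset.univ.sup' Finset.univ_nonempty (fun i => |V P i|)), ?_⟩
  intro q hq i
  obtain ⟨r, rfl⟩ := Nat.exists_eq_add_of_le hq
  have key : U (1 + r) = V (p r) := by
    have h := hstep r
    have hA := (hMmat (p r)).1
    have hdet : IsUnit (Matrix.of fun i j => a i (p r i) j).det :=
      (Matrix.isUnit_iff_isUnit_det _).mp hA
    have heq : (Matrix.of fun i j => a i (p r i) j).mulVec (U (r + 1))
        = fun i => -(b i (p r i)) := by
      funext i
      have := congrFun h i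
      simpa [Pi.add_apply, eq_neg_iff_add_eq_zero] using this
    have := congrArg ((Matrix.of fun i j => a i (p r i) j)⁻¹.mulVec ·) heq
    simp only [Matrix.mulVec_mulVec, Matrix.nonsing_inv_mul _ hdet, Matrix.one_mulVec] at this
    rw [Nat.add_comm 1 r]
    exact this
  rw [key]
  calc |V (p r) i| ≤ Finset.univ.sup' Finset.univ_nonempty (fun j => |V (p r) j|) :=
        Finset.le_sup' (fun j => |V (p r) j|) (Finset.mem_univ i)
    _ ≤ _ := Finset.le_sup' (fun P : Fin n → C => Finset.univ.sup' Finset.univ_nonempty (fun i => |V P i|)) (Finset.mem_univ (p r))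
end

section
/- In the policy-iteration setup, every policy-iteration sequence converges to the solution of the Bellman system: the sequence of vectors (U^q)_{q≥1} converges pointwise to a vector U* which satisfies, for every i ∈ Fin n, the Bellman equation min over c ∈ C of ((∑ j, a i c j * U* j) + b i c) = 0. -/
open Filter

private lemma piv_nonneg_of_mulVec_nonneg {n : ℕ} (M : Matrix (Fin n) (Fin n) ℝ)
    (hM : IsUnit M) (hinv : ∀ i j, 0 ≤ M⁻¹ i j) (v : Fin n → ℝ)
    (hv : ∀ i, 0 ≤ M.mulVec v i) : ∀ i, 0 ≤ v i := by
  intro i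
  have h1 : M⁻¹.mulVec (M.mulVec v) = v := by
    rw [Matrix.mulVec_mulVec, Matrix.nonsing_inv_mul M
      ((Matrix.isUnit_iff_isUnit_det M).mp hM), Matrix.one_mulVec]
  rw [← h1]
  simp only [Matrix.mulVec, dotProduct]
  exact Finset.sum_nonneg fun j _ => mul_nonneg (hinv i j) (hv j)

private lemma piv_mono_finite_eventually_const (u : ℕ → ℝ) (hmono : Monotone u)
    (S : Finset ℝ) (hS : ∀ q, u q ∈ S) : ∃ c q0, ∀ q ≥ q0, u q = c := by
  classical
  set T := S.filter (fun x => ∃ q, u q = x) with hTdef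
  have hT : T.Nonempty := ⟨u 0, Finset.mem_filter.mpr ⟨hS 0, 0, rfl⟩⟩
  obtain ⟨q0, hq0⟩ := (Finset.mem_filter.mp (T.max'_mem hT)).2
  exact ⟨T.max' hT, q0, fun q hq =>
    le_antisymm (Finset.le_max' T _ (Finset.mem_filter.mpr ⟨hS q, q, rfl⟩))
      (hq0 ▸ hmono hq)⟩

/-- Policy-iteration setup: every policy-iteration sequence converges pointwise to
a vector `Ustar` solving the Bellman system `min_c (∑ j, a i c j * Ustar j) + b i c = 0`. -/
theorem policy_iteration_converges
    (n : ℕ) (hn : 1 ≤ n) (C : Type*) [Fintype C] [Nonempty C]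
    (a : Fin n → C → Fin n → ℝ) (b : Fin n → C → ℝ)
    (hMmat : ∀ p : Fin n → C,
      IsUnit (Matrix.of fun i j => a i (p i) j) ∧
      ∀ i j, 0 ≤ (Matrix.of fun i j => a i (p i) j)⁻¹ i j)
    (U : ℕ → Fin n → ℝ) (p : ℕ → Fin n → C)
    (hgreedy : ∀ (q : ℕ) (i : Fin n) (c : C),
      (∑ j, a i (p q i) j * U q j) + b i (p q i) ≤ (∑ j, a i c j * U q j) + b i c)
    (hstep : ∀ q : ℕ,
      (Matrix.of fun i j => a i (p q i) j).mulVec (U (q + 1))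
        + (fun i => b i (p q i)) = 0) :
    ∃ Ustar : Fin n → ℝ,
      (∀ i : Fin n,
        Filter.Tendsto (fun q => U q i) Filter.atTop (nhds (Ustar i))) ∧
      (∀ i : Fin n,
        Finset.univ.inf' Finset.univ_nonempty
          (fun c : C => (∑ j, a i c j * Ustar j) + b i c) = 0) := by
  classical
  -- componentwise form of hstep
  have hstep' : ∀ (q : ℕ) (i : Fin n),
      (∑ j, a i (p q i) j * U (q + 1) j) + b i (p q i) = 0 := by
    intro q i
    have := congrFun (hstep q) i
    simpa [Matrix.mulVec, dotProduct] using this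
  -- monotone step
  have hmonostep : ∀ (q : ℕ) (i : Fin n), U (q + 1) i ≤ U (q + 2) i := by
    intro q i
    set M : Matrix (Fin n) (Fin n) ℝ := Matrix.of fun i j => a i (p (q + 1) i) j with hM
    have hMu := hMmat (p (q + 1))
    have key : ∀ k, 0 ≤ M.mulVec (fun j => U (q + 2) j - U (q + 1) j) k := by
      intro k
      have h1 : (∑ j, a k (p (q + 1) k) j * U (q + 1) j) + b k (p (q + 1) k) ≤ 0 := by
        have := hgreedy (q + 1) k (p q k)
        calc (∑ j, a k (p (q + 1) k) j * U (q + 1) j) + b k (p (q + 1) k)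
            ≤ (∑ j, a k (p q k) j * U (q + 1) j) + b k (p q k) := this
          _ = 0 := hstep' q k
      have h2 : (∑ j, a k (p (q + 1) k) j * U (q + 2) j) + b k (p (q + 1) k) = 0 :=
        hstep' (q + 1) k
      have : M.mulVec (fun j => U (q + 2) j - U (q + 1) j) k
          = (∑ j, a k (p (q + 1) k) j * U (q + 2) j)
            - (∑ j, a k (p (q + 1) k) j * U (q + 1) j) := by
        simp [Matrix.mulVec, dotProduct, mul_sub, Finset.sum_sub_distrib, hM]
      rw [this]
      linarith
    have := piv_nonneg_of_mulVec_nonneg M hMu.1 hMu.2 _ key i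
    linarith
  have hmono : ∀ i : Fin n, Monotone (fun q => U (q + 1) i) := by
    intro i
    apply monotone_nat_of_le_succ
    intro q
    exact hmonostep q i
  -- finite range
  set V : (Fin n → C) → Fin n → ℝ := fun p' =>
    ((Matrix.of fun i j => a i (p' i) j))⁻¹.mulVec (fun i => -(b i (p' i))) with hV
  have hUV : ∀ q, U (q + 1) = V (p q) := by
    intro q
    set M : Matrix (Fin n) (Fin n) ℝ := Matrix.of fun i j => a i (p q i) j with hM
    have hMu := hMmat (p q)
    have h1 : M.mulVec (U (q + 1)) = fun i => -(b i (p q i)) := by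
      funext i
      have := congrFun (hstep q) i
      have h2 : M.mulVec (U (q + 1)) i + b i (p q i) = 0 := by
        simpa using this
      linarith
    have h3 : M⁻¹.mulVec (M.mulVec (U (q + 1))) = U (q + 1) := by
      rw [Matrix.mulVec_mulVec, Matrix.nonsing_inv_mul M
        ((Matrix.isUnit_iff_isUnit_det M).mp hMu.1), Matrix.one_mulVec]
    rw [hV, ← h3, h1]
  have hrange : ∀ (i : Fin n) (q : ℕ),
      U (q + 1) i ∈ Finset.univ.image (fun p' : Fin n → C => V p' i) := by
    intro i q
    rw [hUV q]
    exact Finset.mem_image_of_mem _ (Finset.mem_univ _)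
  -- eventual constancy
  have hconst : ∀ i : Fin n, ∃ c q0, ∀ q ≥ q0, U (q + 1) i = c := by
    intro i
    exact piv_mono_finite_eventually_const _ (hmono i) _ (hrange i)
  choose cst q0 hcst using hconst
  refine ⟨cst, ?_, ?_⟩
  · intro i
    have hev : ∀ᶠ q in atTop, U q i = cst i := by
      rw [Filter.eventually_atTop]
      refine ⟨q0 i + 1, fun q hq => ?_⟩
      have := hcst i (q - 1) (by omega)
      rwa [Nat.sub_add_cancel (by omega)] at this
    exact tendsto_const_nhds.congr' (hev.mono fun q h => h.symm)
  · intro i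
    set Q := Finset.univ.sup q0 with hQ
    have hU1 : ∀ j, U (Q + 1) j = cst j := fun j =>
      hcst j Q (Finset.le_sup (Finset.mem_univ j))
    have hU2 : ∀ j, U (Q + 2) j = cst j := fun j =>
      hcst j (Q + 1) (le_trans (Finset.le_sup (Finset.mem_univ j)) (Nat.le_succ Q))
    have hzero : (∑ j, a i (p (Q + 1) i) j * cst j) + b i (p (Q + 1) i) = 0 := by
      have := hstep' (Q + 1) i
      simpa [hU2] using this
    have hge : ∀ c : C, 0 ≤ (∑ j, a i c j * cst j) + b i c := by
      intro c
      have := hgreedy (Q + 1) i c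
      simp only [hU1] at this
      linarith
    apply le_antisymm
    · exact le_trans (Finset.inf'_le _ (Finset.mem_univ (p (Q + 1) i))) (le_of_eq hzero)
    · exact Finset.le_inf' _ _ fun c _ => hge c
end

section
/- Lemma: every matrix Z of the one-level discretized HJB setup is an M-matrix: Z is invertible and every entry of Z⁻¹ is nonnegative. (The proof exhibits the vector w with w_l = 1 + l·ε, ε = r·Δx/K, which satisfies w_l > 0 and (Z·w)_l > 0 for every row l.) -/
/-
Off the diagonal every entry of `Z` is `≤ 0`: the upwind term is switched on exactly when the
central coefficient `c2/dx² ± c1/(2dx)` could become negative. For `w_l = 1 + (l + 1) ε` with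
`ε = r dx / K`, the row sum `(Z w)_l` is a convex combination, with weights `ρθψ`, `ρθ(1 - ψ)` and
`1 - ρθ`, of `r w_l - c1 ε / dx ≥ r (w_l - 1) > 0`, of `ε / dx` and of `w_l`, hence positive; the
last row has no super-diagonal entry, which is harmless because `ψ = 0` there.
A matrix with nonpositive off-diagonal entries and such a vector `w` is monotone: if `A x ≥ 0`
but `t = min x / w < 0`, attained at `k`, then `y = x - t w ≥ 0` vanishes at `k`, so
`(A y)_k ≤ 0`, whereas `(A y)_k = (A x)_k - t (A w)_k > 0`. Monotonicity gives injectivity and the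
nonnegativity of the columns of `A⁻¹`.
-/

/-- Entry `(l, j)` (0-indexed; the paper's indices are `l+1, j+1`) of the matrix
`Z` of the one-level discretized HJB scheme.  Row `0` is the Dirichlet row. -/
noncomputable def oneLevelHJBEntry (dx r : ℝ) (c1 c2 ρ θ ψ : ℕ → ℝ) (l j : ℕ) : ℝ :=
  if l = 0 then (if j = 0 then 1 else 0)
  else
    -- upwinding indicator
    let I : ℝ := if 2 * c2 l < dx * |c1 l| then 1 else 0
    if j = l then
      ρ l * θ l * (ψ l * (r + 2 * c2 l / dx ^ 2 + I * |c1 l| / dx) + (1 - ψ l) / dx)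
        + ρ l * (1 - θ l) + (1 - ρ l)
    else if j = l + 1 then
      -(ρ l * θ l * ψ l * (c2 l / dx ^ 2 + c1 l / (2 * dx) + I * |c1 l| / (2 * dx)))
    else if j + 1 = l then
      ρ l * θ l * (-(ψ l * (c2 l / dx ^ 2 - c1 l / (2 * dx) + I * |c1 l| / (2 * dx)))
        - (1 - ψ l) / dx)
    else 0

namespace Matrix

variable {n : Type*} [Fintype n]

theorem mulVec_apply_nonpos_of_eq_zero {A : Matrix n n ℝ} (hoff : ∀ i j, i ≠ j → A i j ≤ 0)
    {y : n → ℝ} (hy : 0 ≤ y) {i : n} (hyi : y i = 0) : (A *ᵥ y) i ≤ 0 := by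
  refine Finset.sum_nonpos fun j _ => ?_
  rcases eq_or_ne i j with rfl | hij
  · simp [hyi]
  · exact mul_nonpos_of_nonpos_of_nonneg (hoff i j hij) (hy j)

theorem nonneg_of_mulVec_nonneg {A : Matrix n n ℝ} (hoff : ∀ i j, i ≠ j → A i j ≤ 0)
    {w : n → ℝ} (hw : ∀ i, 0 < w i) (hAw : ∀ i, 0 < (A *ᵥ w) i)
    {x : n → ℝ} (hx : 0 ≤ A *ᵥ x) : 0 ≤ x := by
  by_contra hneg
  obtain ⟨i, hi⟩ : ∃ i, x i < 0 := by simpa [Pi.le_def] using hneg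
  have : Nonempty n := ⟨i⟩
  obtain ⟨k, hk⟩ := Finite.exists_min fun j => x j / w j
  set t := x k / w k
  have ht : t < 0 := (hk i).trans_lt (div_neg_of_neg_of_pos hi (hw i))
  have hy : 0 ≤ x - t • w := fun j => by
    simpa [sub_nonneg] using (le_div_iff₀ (hw j)).mp (hk j)
  have hyk : (x - t • w) k = 0 := by
    simp [t, div_mul_cancel₀ _ (hw k).ne']
  have hAy := mulVec_apply_nonpos_of_eq_zero hoff hy hyk
  rw [mulVec_sub, mulVec_smul, Pi.sub_apply, Pi.smul_apply, smul_eq_mul] at hAy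
  have hxk : 0 ≤ (A *ᵥ x) k := hx k
  linarith [mul_neg_of_neg_of_pos ht (hAw k)]

theorem isUnit_of_mulVec_pos [DecidableEq n] {A : Matrix n n ℝ} (hoff : ∀ i j, i ≠ j → A i j ≤ 0)
    {w : n → ℝ} (hw : ∀ i, 0 < w i) (hAw : ∀ i, 0 < (A *ᵥ w) i) : IsUnit A := by
  rw [← mulVec_injective_iff_isUnit]
  intro x y hxy
  have hxy' : 0 ≤ x - y := nonneg_of_mulVec_nonneg hoff hw hAw (by simp [mulVec_sub, hxy])
  have hyx : 0 ≤ y - x := nonneg_of_mulVec_nonneg hoff hw hAw (by simp [mulVec_sub, hxy])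
  exact le_antisymm (sub_nonneg.mp hyx) (sub_nonneg.mp hxy')

theorem inv_nonneg_of_mulVec_pos [DecidableEq n] {A : Matrix n n ℝ}
    (hoff : ∀ i j, i ≠ j → A i j ≤ 0) {w : n → ℝ} (hw : ∀ i, 0 < w i) (hAw : ∀ i, 0 < (A *ᵥ w) i) (i j : n) : 0 ≤ A⁻¹ i j := by
  have hdet : IsUnit A.det := (isUnit_iff_isUnit_det A).mp (isUnit_of_mulVec_pos hoff hw hAw)
  have hcol : A *ᵥ (A⁻¹ *ᵥ Pi.single j 1) = Pi.single j 1 := by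
    rw [mulVec_mulVec, mul_nonsing_inv A hdet, one_mulVec]
  have := nonneg_of_mulVec_nonneg hoff hw hAw (hcol ▸ Pi.single_nonneg.mpr zero_le_one) i
  simpa [mulVec_single_one] using this

end Matrix

noncomputable def upwindCoeff (dx σ c : ℝ) : ℝ :=
  σ / dx ^ 2 + c / (2 * dx) + (if 2 * σ < dx * |c| then 1 else 0) * |c| / (2 * dx)

theorem upwindCoeff_nonneg {dx σ : ℝ} (hdx : 0 < dx) (hσ : 0 < σ) (c : ℝ) :
    0 ≤ upwindCoeff dx σ c := by
  have hform : upwindCoeff dx σ c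
      = (2 * σ + dx * (c + (if 2 * σ < dx * |c| then 1 else 0) * |c|)) / (2 * dx ^ 2) := by
    unfold upwindCoeff; field_simp; ring
  rw [hform]
  refine div_nonneg ?_ (by positivity)
  split_ifs <;> nlinarith [neg_abs_le c]

theorem upwindCoeff_sub_upwindCoeff_neg {dx : ℝ} (hdx : dx ≠ 0) (σ c : ℝ) :
    upwindCoeff dx σ c - upwindCoeff dx σ (-c) = c / dx := by
  simp only [upwindCoeff, abs_neg]; field_simp; ring

def tridiagRow (d p q : ℝ) (l j : ℕ) : ℝ :=
  if j = l then d else if j = l + 1 then -p else if j + 1 = l then -q else 0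

theorem tridiagRow_nonpos {d p q : ℝ} (hp : 0 ≤ p) (hq : 0 ≤ q) {l j : ℕ} (hjl : j ≠ l) :
    tridiagRow d p q l j ≤ 0 := by
  simp only [tridiagRow, if_neg hjl]; split_ifs <;> linarith

theorem sum_range_tridiagRow_mul (d p q : ℝ) (v : ℕ → ℝ) {l M : ℕ} (hl : l ≠ 0) (hlM : l < M)
    (hp : l + 1 = M → p = 0) :
    ∑ j ∈ Finset.range M, tridiagRow d p q l j * v j
      = -q * v (l - 1) + d * v l - p * v (l + 1) := by
  obtain ⟨k, rfl⟩ := Nat.exists_eq_succ_of_ne_zero hl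
  have hsplit : ∀ j, tridiagRow d p q (k + 1) j * v j = (if k = j then -q * v k else 0)
      + (if k + 1 = j then d * v (k + 1) else 0) + (if k + 2 = j then -p * v (k + 2) else 0) := by
    intro j; unfold tridiagRow; split_ifs <;> (try subst_vars) <;> first | omega | ring
  simp only [hsplit, Finset.sum_add_distrib, Finset.sum_ite_eq, Finset.mem_range]
  rcases lt_or_eq_of_le (Nat.succ_le_of_lt hlM) with h | h
  · simp [h, hlM, show k < M by omega]; ring
  · simp [hp h, hlM, show k < M by omega, show ¬ k + 2 < M by omega]

section OneLevelHJB

variable {dx r : ℝ} {c1 c2 ρ θ ψ : ℕ → ℝ}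

theorem oneLevelHJBEntry_eq_tridiagRow {l : ℕ} (hl : l ≠ 0) (j : ℕ) :
    oneLevelHJBEntry dx r c1 c2 ρ θ ψ l j = tridiagRow
      (ρ l * θ l * (ψ l * (r + upwindCoeff dx (c2 l) (c1 l) + upwindCoeff dx (c2 l) (-c1 l))
        + (1 - ψ l) / dx) + (1 - ρ l * θ l))
      (ρ l * θ l * ψ l * upwindCoeff dx (c2 l) (c1 l))
      (ρ l * θ l * (ψ l * upwindCoeff dx (c2 l) (-c1 l) + (1 - ψ l) / dx)) l j := by
  simp only [oneLevelHJBEntry, tridiagRow, upwindCoeff, abs_neg, if_neg hl]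
  split_ifs <;> ring

theorem oneLevelHJBEntry_nonpos_of_ne {l j : ℕ} (hjl : j ≠ l) (hdx : 0 < dx) (hc2 : 0 < c2 l)
    (hρ : 0 ≤ ρ l) (hθ : 0 ≤ θ l) (hψ : ψ l ∈ Set.Icc 0 1) :
    oneLevelHJBEntry dx r c1 c2 ρ θ ψ l j ≤ 0 := by
  rcases eq_or_ne l 0 with rfl | hl
  · simp [oneLevelHJBEntry, hjl]
  rw [oneLevelHJBEntry_eq_tridiagRow hl]
  have hU := upwindCoeff_nonneg hdx hc2
  have hρθ := mul_nonneg hρ hθ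
  exact tridiagRow_nonpos (mul_nonneg (mul_nonneg hρθ hψ.1) (hU _))
    (mul_nonneg hρθ (add_nonneg (mul_nonneg hψ.1 (hU _)) (div_nonneg (sub_nonneg.2 hψ.2) hdx.le)))
    hjl

theorem oneLevelHJB_sum_mul_eq {M l : ℕ} (hl : l ≠ 0) (hlM : l < M) (hdx : dx ≠ 0)
    (hlast : l + 1 = M → ψ l = 0) (ε : ℝ) :
    ∑ j ∈ Finset.range M, oneLevelHJBEntry dx r c1 c2 ρ θ ψ l j * (1 + (j + 1) * ε)
      = ρ l * θ l * (ψ l * (r * (1 + (l + 1) * ε) - c1 l * ε / dx) + (1 - ψ l) * (ε / dx))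
        + (1 - ρ l * θ l) * (1 + (l + 1) * ε) := by
  simp only [oneLevelHJBEntry_eq_tridiagRow hl]
  rw [sum_range_tridiagRow_mul _ _ _ _ hl hlM (fun h => by simp [hlast h])]
  have hUL := upwindCoeff_sub_upwindCoeff_neg hdx (c2 l) (c1 l)
  push_cast [Nat.cast_sub (Nat.one_le_iff_ne_zero.2 hl)]
  linear_combination (-(ρ l * θ l * ψ l * ε)) * hUL

theorem oneLevelHJB_sum_mul_pos {K : ℝ} {M l : ℕ} (hlM : l < M) (hdx : 0 < dx) (hr : 0 < r)
    (hK : 0 < K) (hc1 : |c1 l| ≤ K) (hρ : ρ l ∈ Set.Icc 0 1) (hθ : θ l ∈ Set.Icc 0 1)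
    (hψ : ψ l ∈ Set.Icc 0 1) (hlast : l + 1 = M → ψ l = 0) :
    0 < ∑ j ∈ Finset.range M,
      oneLevelHJBEntry dx r c1 c2 ρ θ ψ l j * (1 + (j + 1) * (r * dx / K)) := by
  set ε := r * dx / K with hε_def
  have hε : 0 < ε := by positivity
  rcases eq_or_ne l 0 with rfl | hl
  · simp [oneLevelHJBEntry, hlM]
    positivity
  rw [oneLevelHJB_sum_mul_eq hl hlM hdx.ne' hlast]
  set v : ℝ := 1 + (l + 1) * ε
  have hv : 1 < v := lt_add_of_pos_right _ (by positivity)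
  have hdrift : c1 l * ε / dx ≤ r := by
    have : c1 l * ε / dx = r * (c1 l / K) := by rw [hε_def]; field_simp
    rw [this]
    exact mul_le_of_le_one_right hr.le ((div_le_one hK).2 ((le_abs_self _).trans hc1))
  have hdiffusive : 0 < r * v - c1 l * ε / dx := by nlinarith
  have hρθ : ρ l * θ l ∈ Set.Icc 0 1 := ⟨mul_nonneg hρ.1 hθ.1, mul_le_one₀ hρ.2 hθ.1 hθ.2⟩
  have hactive := convex_Ioi (0 : ℝ) hdiffusive (by positivity : 0 < ε / dx) hψ.1
    (sub_nonneg.2 hψ.2) (by ring)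
  exact convex_Ioi (0 : ℝ) hactive (by positivity : 0 < v) hρθ.1 (sub_nonneg.2 hρθ.2) (by ring)

end OneLevelHJB

theorem oneLevel_Z_is_Mmatrix_general
    (M : ℕ) (dx r K : ℝ) (hdx : 0 < dx) (hr : 0 < r) (hK : 0 < K)
    (c1 c2 ρ θ ψ : ℕ → ℝ)
    (hc2 : ∀ l < M, 0 < c2 l) (hc1 : ∀ l < M, |c1 l| ≤ K)
    (hρ : ∀ l < M, ρ l = 0 ∨ ρ l = 1)
    (hθ : ∀ l < M, θ l = 0 ∨ θ l = 1)
    (hψ : ∀ l < M, ψ l = 0 ∨ ψ l = 1)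
    (hψM : ψ (M - 1) = 0)
    (Z : Matrix (Fin M) (Fin M) ℝ)
    (hZ : ∀ l j : Fin M, Z l j = oneLevelHJBEntry dx r c1 c2 ρ θ ψ l.val j.val) :
    IsUnit Z ∧ ∀ l j, 0 ≤ Z⁻¹ l j := by
  have hIcc : ∀ {x : ℝ}, x = 0 ∨ x = 1 → x ∈ Set.Icc (0 : ℝ) 1 := by
    rintro x (rfl | rfl) <;> simp
  have hlast : ∀ l, l + 1 = M → ψ l = 0 := by rintro l rfl; simpa using hψM
  set w : Fin M → ℝ := fun j => 1 + (j + 1) * (r * dx / K)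
  have hw : ∀ j, 0 < w j := fun j => by positivity
  have hoff : ∀ l j : Fin M, l ≠ j → Z l j ≤ 0 := fun l j hlj => by
    rw [hZ]
    exact oneLevelHJBEntry_nonpos_of_ne (Fin.val_ne_of_ne hlj.symm) hdx (hc2 l l.2)
      (hIcc (hρ l l.2)).1 (hIcc (hθ l l.2)).1 (hIcc (hψ l l.2))
  have hZw : ∀ l, 0 < Z.mulVec w l := fun l => by
    simp only [Matrix.mulVec, dotProduct, hZ, w]
    rw [Fin.sum_univ_eq_sum_range
      (fun j => oneLevelHJBEntry dx r c1 c2 ρ θ ψ l j * (1 + (j + 1) * (r * dx / K))) M]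
    exact oneLevelHJB_sum_mul_pos l.2 hdx hr hK (hc1 l l.2) (hIcc (hρ l l.2)) (hIcc (hθ l l.2))
      (hIcc (hψ l l.2)) (hlast l)
  exact ⟨Matrix.isUnit_of_mulVec_pos hoff hw hZw, Matrix.inv_nonneg_of_mulVec_pos hoff hw hZw⟩

/-- The matrix `Z` of the one-level discretized HJB scheme is an M-matrix:
it is invertible and every entry of `Z⁻¹` is nonnegative. -/
theorem oneLevel_Z_is_Mmatrix
    (M : ℕ) (hM : 2 ≤ M) (dx r K : ℝ) (hdx : 0 < dx) (hr : 0 < r) (hK : 0 < K)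
    (c1 c2 ρ θ ψ : ℕ → ℝ)
    (hc2 : ∀ l < M, 0 < c2 l) (hc1 : ∀ l < M, |c1 l| ≤ K)
    (hρ : ∀ l < M, ρ l = 0 ∨ ρ l = 1)
    (hθ : ∀ l < M, θ l = 0 ∨ θ l = 1)
    (hψ : ∀ l < M, ψ l = 0 ∨ ψ l = 1)
    (hψM : ψ (M - 1) = 0)
    (Z : Matrix (Fin M) (Fin M) ℝ)
    (hZ : ∀ l j : Fin M, Z l j = oneLevelHJBEntry dx r c1 c2 ρ θ ψ l.val j.val) :
    IsUnit Z ∧ ∀ l j, 0 ≤ Z⁻¹ l j :=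
  oneLevel_Z_is_Mmatrix_general M dx r K hdx hr hK c1 c2 ρ θ ψ hc2 hc1 hρ hθ hψ hψM Z hZ
end

section
/- Let r > 0, Δx > 0, c1 ∈ ℝ and c2 > 0 with 2·c2 ≥ |c1|·Δx (central differencing regime). Let W₋, W, W₊ ∈ ℝ satisfy W₊ = W + Δx, W ≥ W₋ + Δx, and c2·(W₊ + W₋ − 2W)/Δx² + c1·(W₊ − W₋)/(2Δx) − r·W = 0. Then W ≤ c1/r. -/
/-- Key inequality in the stability proof (central-differencing case): at the last
grid index where the increment exceeds `Δx`, the discrete equation forces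
`W ≤ c1 / r`. -/
theorem stability_central_differencing_bound
    (r dx c1 c2 : ℝ) (hr : 0 < r) (hdx : 0 < dx) (hc2 : 0 < c2)
    (hcentral : |c1| * dx ≤ 2 * c2)
    (Wm W Wp : ℝ) (hWp : Wp = W + dx) (hWm : Wm + dx ≤ W)
    (heq : c2 * (Wp + Wm - 2 * W) / dx ^ 2 + c1 * (Wp - Wm) / (2 * dx) - r * W = 0) :
    W ≤ c1 / r := by
  have hc1 : c1 * dx ≤ 2 * c2 := le_trans (by nlinarith [le_abs_self c1]) hcentral
  subst hWp
  have hdx2 : (dx : ℝ) ^ 2 > 0 := by positivity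
  rw [div_add_div _ _ (by positivity) (by positivity), sub_eq_zero,
    div_eq_iff (by positivity)] at heq
  have ht : 0 ≤ W - Wm - dx := by linarith
  have key : r * W ≤ c1 := by
    nlinarith [mul_nonneg (mul_nonneg ht (by linarith : (0:ℝ) ≤ 2 * c2 - c1 * dx)) hdx.le,
      pow_pos hdx 3]
  rw [le_div_iff₀ hr]
  linarith [key]
end

section
/- Let μ ∈ ℝ, B > 0, s > 0, r ≥ 0, k ∈ ℝ, α : ℝ → ℝ, v : ℝ → ℝ and x₀ ∈ ℝ. Assume v admits a left derivative D⁻v(x₀) and a right derivative D⁺v(x₀) at x₀ with D⁺v(x₀) ≥ 1, and that v is a viscosity subsolution of min{−Lv, v'−1} = 0 at x₀: for every twice continuously differentiable φ : ℝ → ℝ such that x₀ is a local maximum of v − φ, one has min( −(μ·B − α((k−x₀)⁺))·φ'(x₀) − (s²/2)·φ''(x₀) + r·v(x₀), φ'(x₀) − 1 ) ≤ 0. Then D⁻v(x₀) ≤ D⁺v(x₀). -/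
/-! If `D⁺v(x₀) < p < D⁻v(x₀)`, every parabola `φ x = p (x - x₀) - n (x - x₀)²` touches `v`
from above at `x₀`: the one-sided slopes of `v - φ` at `x₀` are `D⁻v(x₀) - p > 0` on the
left and `D⁺v(x₀) - p < 0` on the right. Choosing `n` large makes `-Lφ(x₀) > 0`, while
`φ'(x₀) - 1 = p - 1 > 0`, contradicting the subsolution inequality. -/

open Filter Topology

section SlopeExtremum

variable {k : Type*} [Field k] [LinearOrder k] [IsStrictOrderedRing k] [TopologicalSpace k]
  {f : k → k} {a : k}

theorem isLocalMax_of_eventually_slope (hleft : ∀ᶠ x in 𝓝[<] a, 0 ≤ slope f a x)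
    (hright : ∀ᶠ x in 𝓝[>] a, slope f a x ≤ 0) : IsLocalMax f a := by
  rw [IsLocalMax, IsMaxFilter, ← nhdsNE_sup_pure, ← nhdsLT_sup_nhdsGT, eventually_sup,
    eventually_sup, eventually_pure]
  refine ⟨⟨?_, ?_⟩, le_rfl⟩
  · filter_upwards [hleft, self_mem_nhdsWithin] with x hx (hxa : x < a)
    rw [slope_comm] at hx
    exact (slope_nonneg_iff_of_le hxa.le).mp hx
  · filter_upwards [hright, self_mem_nhdsWithin] with x hx (hax : a < x)
    exact (slope_nonpos_iff_of_le hax.le).mp hx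

end SlopeExtremum

theorem Filter.Tendsto.slope_sub_of_hasDerivAt {𝕜 E : Type*} [NontriviallyNormedField 𝕜]
    [NormedAddCommGroup E] [NormedSpace 𝕜 E] {f g : 𝕜 → E} {a : 𝕜} {D g' : E}
    {l : Filter 𝕜} (hf : Tendsto (slope f a) l (𝓝 D)) (hg : HasDerivAt g g' a)
    (hl : l ≤ 𝓝[≠] a) : Tendsto (slope (fun x => f x - g x) a) l (𝓝 (D - g')) := by
  have hslope : slope (fun x => f x - g x) a = fun x => slope f a x - slope g a x := by
    funext x
    simp only [slope_def_module, smul_sub]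
    abel
  rw [hslope]
  exact hf.sub ((hasDerivAt_iff_tendsto_slope.mp hg).mono_left hl)

section Parabola

variable (a p n : ℝ)

theorem hasDerivAt_parabola (x : ℝ) :
    HasDerivAt (fun x => p * (x - a) - n * (x - a) ^ 2) (p - 2 * n * (x - a)) x := by
  have hlin : HasDerivAt (fun x : ℝ => x - a) 1 x := (hasDerivAt_id x).sub_const a
  exact ((hlin.const_mul p).fun_sub ((hlin.fun_pow 2).const_mul n)).congr_deriv (by norm_num; ring)

theorem deriv_parabola :
    deriv (fun x => p * (x - a) - n * (x - a) ^ 2) = fun x => p - 2 * n * (x - a) :=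
  funext fun x => (hasDerivAt_parabola a p n x).deriv

theorem deriv_deriv_parabola :
    deriv (deriv fun x => p * (x - a) - n * (x - a) ^ 2) a = -(2 * n) := by
  rw [deriv_parabola]
  have hlin : HasDerivAt (fun x : ℝ => x - a) 1 a := (hasDerivAt_id a).sub_const a
  simp [((hlin.const_mul (2 * n)).const_sub p).deriv]

end Parabola

theorem subsolution_one_sided_derivatives_general
    (μ B s r k : ℝ) (hs : 0 < s)
    (α : ℝ → ℝ) (v : ℝ → ℝ) (x₀ : ℝ) (Dm Dp : ℝ)
    (hDm : Filter.Tendsto (fun x => (v x - v x₀) / (x - x₀))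
      (nhdsWithin x₀ (Set.Iio x₀)) (nhds Dm))
    (hDp : Filter.Tendsto (fun x => (v x - v x₀) / (x - x₀))
      (nhdsWithin x₀ (Set.Ioi x₀)) (nhds Dp))
    (hDp1 : 1 ≤ Dp)
    (hsub : ∀ φ : ℝ → ℝ, ContDiff ℝ 2 φ →
      IsLocalMax (fun x => v x - φ x) x₀ →
      min (-(μ * B - α (max (k - x₀) 0)) * deriv φ x₀
            - s ^ 2 / 2 * deriv (deriv φ) x₀ + r * v x₀)
          (deriv φ x₀ - 1) ≤ 0) :
    Dm ≤ Dp := by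
  by_contra! hlt
  obtain ⟨p, hDp_lt, hlt_Dm⟩ := exists_between hlt
  set A := μ * B - α (max (k - x₀) 0)
  set n := (A * p - r * v x₀ + 1) / s ^ 2
  set φ : ℝ → ℝ := fun x => p * (x - x₀) - n * (x - x₀) ^ 2
  have hφ : HasDerivAt φ p x₀ := by simpa using hasDerivAt_parabola x₀ p n x₀
  rw [← slope_fun_def_field] at hDm hDp
  have hmax : IsLocalMax (fun x => v x - φ x) x₀ :=
    isLocalMax_of_eventually_slope
      ((hDm.slope_sub_of_hasDerivAt hφ (nhdsLT_le_nhdsNE x₀)).eventually_const_le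
        (sub_pos.2 hlt_Dm))
      ((hDp.slope_sub_of_hasDerivAt hφ (nhdsGT_le_nhdsNE x₀)).eventually_le_const
        (sub_neg.2 hDp_lt))
  have hviscosity := hsub φ (by fun_prop) hmax
  rw [hφ.deriv, deriv_deriv_parabola] at hviscosity
  have hLφ : -A * p - s ^ 2 / 2 * -(2 * n) + r * v x₀ = 1 := by
    simp only [n]
    field_simp
    ring
  rw [hLφ] at hviscosity
  linarith [lt_min one_pos (show 0 < p - 1 by linarith)]

/-- Subsolution step in the C¹ regularity proof: if `v` has one-sided
derivatives at `x₀` with `D⁺v(x₀) ≥ 1` and is a viscosity subsolution of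
`min(-Lv, v' - 1) = 0` at `x₀`, then `D⁻v(x₀) ≤ D⁺v(x₀)`. -/
theorem subsolution_one_sided_derivatives
    (μ B s r k : ℝ) (hB : 0 < B) (hs : 0 < s) (hr : 0 ≤ r)
    (α : ℝ → ℝ) (v : ℝ → ℝ) (x₀ : ℝ) (Dm Dp : ℝ)
    (hDm : Filter.Tendsto (fun x => (v x - v x₀) / (x - x₀))
      (nhdsWithin x₀ (Set.Iio x₀)) (nhds Dm))
    (hDp : Filter.Tendsto (fun x => (v x - v x₀) / (x - x₀))
      (nhdsWithin x₀ (Set.Ioi x₀)) (nhds Dp))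
    (hDp1 : 1 ≤ Dp)
    (hsub : ∀ φ : ℝ → ℝ, ContDiff ℝ 2 φ →
      IsLocalMax (fun x => v x - φ x) x₀ →
      min (-(μ * B - α (max (k - x₀) 0)) * deriv φ x₀
            - s ^ 2 / 2 * deriv (deriv φ) x₀ + r * v x₀)
          (deriv φ x₀ - 1) ≤ 0) :
    Dm ≤ Dp :=
  subsolution_one_sided_derivatives_general μ B s r k hs α v x₀ Dm Dp hDm hDp hDp1 hsub
end

section
/- Let μ ∈ ℝ, B > 0, s > 0, r > 0, k ∈ ℝ and let α : ℝ → ℝ be continuous. Let U ⊆ ℝ be a nonempty open interval and let v : ℝ → ℝ be continuous on U. Assume v is a viscosity solution on U of the linear equation (μB − α((k−x)⁺))·v'(x) + (s²/2)·v''(x) − r·v(x) = 0, meaning: for every x₀ ∈ U and every twice continuously differentiable φ : ℝ → ℝ, if x₀ is a local minimum of v − φ then (μB − α((k−x₀)⁺))·φ'(x₀) + (s²/2)·φ''(x₀) − r·v(x₀) ≤ 0, and if x₀ is a local maximum of v − φ then (μB − α((k−x₀)⁺))·φ'(x₀) + (s²/2)·φ''(x₀) − r·v(x₀) ≥ 0.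 Then v is twice continuously differentiable on U. -/
/-!
Near any point of `U`, solve the linear two-point boundary value problem on a short interval
`[a, b]` with the boundary values of `v`: Picard–Lindelöf gives the initial value problems, and a
shooting argument works because the equation has a maximum principle (`r > 0`, `s > 0`). The
classical solution `w` is a legitimate test function at every interior point, and at an interior
extremum of `v - w` the viscosity inequalities collapse to `r (w - v) ≥ 0`, resp. `≤ 0`. The
maximum principle for continuous functions then forces `v = w` on `[a, b]`, so `v` is `C²` there.
-/

open Set Filter Topology

theorem IsLocalMax.deriv_deriv_nonpos {f : ℝ → ℝ} {x : ℝ} (h : IsLocalMax f x)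
    (hc : ContinuousAt f x) : deriv (deriv f) x ≤ 0 := by
  by_contra! hpos
  have hconst : f =ᶠ[𝓝 x] fun _ => f x :=
    (h.and (isLocalMin_of_deriv_deriv_pos hpos h.deriv_eq_zero hc)).mono
      fun y hy => le_antisymm hy.1 hy.2
  have : deriv (deriv f) x = 0 := by
    rw [hconst.deriv.deriv_eq, deriv_const', deriv_const]
  exact hpos.ne' this

theorem ContDiffAt.exists_contDiff_eventuallyEq {E F : Type*} [NormedAddCommGroup E]
    [NormedSpace ℝ E] [HasContDiffBump E] [NormedAddCommGroup F] [NormedSpace ℝ F]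
    {f : E → F} {x : E} {n : ℕ} (hf : ContDiffAt ℝ n f x) :
    ∃ φ : E → F, ContDiff ℝ n φ ∧ φ =ᶠ[𝓝 x] f := by
  obtain ⟨u, hu, hfu⟩ := hf.contDiffOn le_rfl (by simp)
  obtain ⟨ε, hε, hball⟩ := Metric.mem_nhds_iff.mp hu
  let χ : ContDiffBump x := ⟨ε / 4, ε / 2, by positivity, by linarith⟩
  refine ⟨fun y => χ y • f y, ?_, χ.eventuallyEq_one.mono fun y hy => by simp [hy]⟩
  refine contDiff_of_contDiffOn_union_of_isOpen
    (χ.contDiff.contDiffOn.smul (hfu.mono hball)) (contDiffOn_const (c := 0) |>.congr ?_)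
    ?_ Metric.isOpen_ball (Metric.isClosed_closedBall (x := x) (ε := ε / 2)).isOpen_compl
  · intro y hy
    have : χ y = 0 := χ.zero_of_le_dist (not_le.mp (by simpa using hy)).le
    simp [this]
  · refine eq_univ_of_forall fun y => ?_
    by_cases hy : y ∈ Metric.ball x ε
    · exact Or.inl hy
    · exact Or.inr fun hy' => hy (Metric.closedBall_subset_ball (by linarith) hy')

theorem contDiffOn_two_of_hasDerivAt {f f' f'' : ℝ → ℝ} {s : Set ℝ} (hs : IsOpen s)
    (hf : ∀ x ∈ s, HasDerivAt f (f' x) x) (hf' : ∀ x ∈ s, HasDerivAt f' (f'' x) x)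
    (hf'' : ContinuousOn f'' s) : ContDiffOn ℝ 2 f s := by
  have hderiv : EqOn (deriv f) f' s := fun x hx => (hf x hx).deriv
  have hderiv' : EqOn (deriv f') f'' s := fun x hx => (hf' x hx).deriv
  rw [show (2 : WithTop ℕ∞) = 1 + 1 from rfl, contDiffOn_succ_iff_deriv_of_isOpen hs]
  refine ⟨fun x hx => (hf x hx).differentiableAt.differentiableWithinAt, by simp,
    ContDiffOn.congr ?_ hderiv⟩
  rw [show (1 : WithTop ℕ∞) = 0 + 1 from rfl, contDiffOn_succ_iff_deriv_of_isOpen hs]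
  exact ⟨fun x hx => (hf' x hx).differentiableAt.differentiableWithinAt, by simp,
    contDiffOn_zero.2 (hf''.congr hderiv')⟩

theorem ContinuousOn.nonpos_of_isLocalMax {u : ℝ → ℝ} {a b : ℝ}
    (hu : ContinuousOn u (Icc a b)) (ha : u a ≤ 0) (hb : u b ≤ 0)
    (hmax : ∀ x ∈ Ioo a b, IsLocalMax u x → u x ≤ 0) : ∀ x ∈ Icc a b, u x ≤ 0 := by
  intro x hx
  obtain ⟨m, hm, hmax_m⟩ := isCompact_Icc.exists_isMaxOn ⟨x, hx⟩ hu
  refine (hmax_m hx).trans ?_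
  rcases hm.1.eq_or_lt with rfl | ham
  · exact ha
  rcases hm.2.eq_or_lt with rfl | hmb
  · exact hb
  exact hmax m ⟨ham, hmb⟩ (hmax_m.isLocalMax (Icc_mem_nhds ham hmb))

theorem exists_hasDerivWithinAt_Icc_of_linear {E : Type*} [NormedAddCommGroup E]
    [NormedSpace ℝ E] [CompleteSpace E] {A : ℝ → E →L[ℝ] E} {a b K : ℝ}
    (hab : a ≤ b) (hA : ContinuousOn A (Icc a b)) (hK : ∀ t ∈ Icc a b, ‖A t‖ ≤ K)
    (hKab : 2 * K * (b - a) ≤ 1) (y₀ : E) :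
    ∃ Y : ℝ → E, Y a = y₀ ∧ ∀ t ∈ Icc a b, HasDerivWithinAt Y (A t (Y t)) (Icc a b) t := by
  have hK₀ : 0 ≤ K := (norm_nonneg _).trans (hK a (left_mem_Icc.2 hab))
  -- Picard–Lindelöf on the ball of radius `2‖y₀‖` about `0`, where `‖A t x‖ ≤ 2K‖y₀‖`.
  have hpl : IsPicardLindelof (fun t y => A t y) (t₀ := ⟨a, left_mem_Icc.2 hab⟩) 0
      (2 * ‖y₀‖₊) ‖y₀‖₊ (K.toNNReal * (2 * ‖y₀‖₊)) K.toNNReal := by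
    refine ⟨fun t ht => ?_, fun _ _ => hA.clm_apply continuousOn_const, fun t ht x hx => ?_, ?_⟩
    · exact ((A t).lipschitz.weaken
        ((Real.le_toNNReal_iff_coe_le hK₀).2 (hK t ht))).lipschitzOnWith
    · have hx : ‖x‖ ≤ 2 * ‖y₀‖ := by simpa using hx
      calc ‖A t x‖ ≤ ‖A t‖ * ‖x‖ := (A t).le_opNorm x
        _ ≤ K * (2 * ‖y₀‖) := mul_le_mul (hK t ht) hx (norm_nonneg _) hK₀
        _ = _ := by simp [Real.coe_toNNReal _ hK₀]
    · simp only [sub_self, max_eq_left (sub_nonneg.2 hab), NNReal.coe_mul, NNReal.coe_ofNat,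
        coe_nnnorm, Real.coe_toNNReal _ hK₀]
      nlinarith [norm_nonneg y₀]
  exact hpl.exists_eq_forall_mem_Icc_hasDerivWithinAt (by simp)

theorem exists_Icc_forall_exists_hasDerivWithinAt_of_linear {E : Type*} [NormedAddCommGroup E]
    [NormedSpace ℝ E] [CompleteSpace E] {A : ℝ → E →L[ℝ] E} {x₀ : ℝ} {s : Set ℝ}
    (hA : ContinuousOn A s) (hs : s ∈ 𝓝 x₀) :
    ∃ a b, a < x₀ ∧ x₀ < b ∧ Icc a b ⊆ s ∧ ∀ y₀ : E, ∃ Y : ℝ → E, Y a = y₀ ∧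
      ∀ t ∈ Icc a b, HasDerivWithinAt Y (A t (Y t)) (Icc a b) t := by
  obtain ⟨δ, hδ, hδs⟩ := Metric.nhds_basis_closedBall.mem_iff.mp hs
  rw [Real.closedBall_eq_Icc] at hδs
  obtain ⟨C, hC⟩ := isCompact_Icc.exists_bound_of_continuousOn (hA.mono hδs)
  -- a short interval: `2 |C| (b - a) ≤ 1` is what Picard–Lindelöf needs
  set ε := min δ (4 * |C| + 1)⁻¹
  have hε₀ : 0 < ε := lt_min hδ (by positivity)
  have hεC : ε * (4 * |C| + 1) ≤ 1 :=
    calc ε * (4 * |C| + 1) ≤ (4 * |C| + 1)⁻¹ * (4 * |C| + 1) :=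
          mul_le_mul_of_nonneg_right (min_le_right _ _) (by positivity)
      _ = 1 := inv_mul_cancel₀ (by positivity)
  have hsub : Icc (x₀ - ε) (x₀ + ε) ⊆ Icc (x₀ - δ) (x₀ + δ) :=
    Icc_subset_Icc (by linarith [min_le_left δ (4 * |C| + 1)⁻¹])
      (by linarith [min_le_left δ (4 * |C| + 1)⁻¹])
  refine ⟨x₀ - ε, x₀ + ε, by linarith, by linarith, hsub.trans hδs, fun y₀ => ?_⟩
  refine exists_hasDerivWithinAt_Icc_of_linear (by linarith) (hA.mono (hsub.trans hδs))
    (fun t ht => (hC t (hsub ht)).trans (le_abs_self C)) ?_ y₀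
  nlinarith [abs_nonneg C]

/-- `(w, w')` solves the first-order system `Y' = secondOrderSystem β d r t Y` exactly when
`β w' + d w'' = r w`. -/
noncomputable def secondOrderSystem (β : ℝ → ℝ) (d r t : ℝ) : ℝ × ℝ →L[ℝ] ℝ × ℝ :=
  (ContinuousLinearMap.snd ℝ ℝ ℝ).prod
    (d⁻¹ • (r • ContinuousLinearMap.fst ℝ ℝ ℝ - β t • ContinuousLinearMap.snd ℝ ℝ ℝ))

@[simp]
theorem secondOrderSystem_apply (β : ℝ → ℝ) (d r t : ℝ) (y : ℝ × ℝ) :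
    secondOrderSystem β d r t y = (y.2, d⁻¹ * (r * y.1 - β t * y.2)) := by
  simp [secondOrderSystem]

theorem continuous_secondOrderSystem {β : ℝ → ℝ} (hβ : Continuous β) (d r : ℝ) :
    Continuous (secondOrderSystem β d r) :=
  (ContinuousLinearMap.prodₗᵢ ℝ).continuous.comp (continuous_const.prodMk (by fun_prop))

def IsViscositySolutionOn (β : ℝ → ℝ) (d r : ℝ) (v : ℝ → ℝ) (U : Set ℝ) : Prop :=
  ∀ x₀ ∈ U, ∀ φ : ℝ → ℝ, ContDiff ℝ 2 φ →
    (IsLocalMin (fun x => v x - φ x) x₀ →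
      β x₀ * deriv φ x₀ + d * deriv (deriv φ) x₀ - r * v x₀ ≤ 0) ∧
    (IsLocalMax (fun x => v x - φ x) x₀ →
      0 ≤ β x₀ * deriv φ x₀ + d * deriv (deriv φ) x₀ - r * v x₀)

def IsClassicalSolutionOn (β : ℝ → ℝ) (d r : ℝ) (w : ℝ → ℝ) (s : Set ℝ) : Prop :=
  ∀ x ∈ s, ContDiffAt ℝ 2 w x ∧ β x * deriv w x + d * deriv (deriv w) x = r * w x

section
variable {β : ℝ → ℝ} {d r : ℝ} {v w : ℝ → ℝ} {U : Set ℝ} {a b : ℝ}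

namespace IsViscositySolutionOn

theorem le_of_isLocalMin (hv : IsViscositySolutionOn β d r v U) {x₀ : ℝ} (hx₀ : x₀ ∈ U)
    {φ : ℝ → ℝ} (hφ : ContDiffAt ℝ 2 φ x₀) (hmin : IsLocalMin (fun x => v x - φ x) x₀) :
    β x₀ * deriv φ x₀ + d * deriv (deriv φ) x₀ - r * v x₀ ≤ 0 := by
  obtain ⟨ψ, hψ, hψφ⟩ := hφ.exists_contDiff_eventuallyEq (n := 2)
  have := (hv x₀ hx₀ ψ hψ).1 (hmin.congr (hψφ.mono fun x hx => by simp only [hx]))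
  rwa [hψφ.deriv_eq, hψφ.deriv.deriv_eq] at this

theorem le_of_isLocalMax (hv : IsViscositySolutionOn β d r v U) {x₀ : ℝ} (hx₀ : x₀ ∈ U)
    {φ : ℝ → ℝ} (hφ : ContDiffAt ℝ 2 φ x₀) (hmax : IsLocalMax (fun x => v x - φ x) x₀) :
    0 ≤ β x₀ * deriv φ x₀ + d * deriv (deriv φ) x₀ - r * v x₀ := by
  obtain ⟨ψ, hψ, hψφ⟩ := hφ.exists_contDiff_eventuallyEq (n := 2)
  have := (hv x₀ hx₀ ψ hψ).2 (hmax.congr (hψφ.mono fun x hx => by simp only [hx]))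
  rwa [hψφ.deriv_eq, hψφ.deriv.deriv_eq] at this

theorem eqOn_of_isClassicalSolutionOn (hv : IsViscositySolutionOn β d r v U) (hr : 0 < r)
    (hU : Ioo a b ⊆ U) (hvc : ContinuousOn v (Icc a b))
    (hw : IsClassicalSolutionOn β d r w (Ioo a b)) (hwc : ContinuousOn w (Icc a b))
    (ha : v a = w a) (hb : v b = w b) :
    EqOn v w (Icc a b) := by
  have hle := (hvc.sub hwc).nonpos_of_isLocalMax (by simp [ha]) (by simp [hb])
    fun x hx hmax => by
      have := hv.le_of_isLocalMax (hU hx) (hw x hx).1 hmax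
      rw [(hw x hx).2] at this
      rw [Pi.sub_apply]
      nlinarith
  have hge := (hwc.sub hvc).nonpos_of_isLocalMax (by simp [ha]) (by simp [hb])
    fun x hx hmax => by
      have := hv.le_of_isLocalMin (hU hx) (hw x hx).1 (by simpa using hmax.neg)
      rw [(hw x hx).2] at this
      rw [Pi.sub_apply]
      nlinarith
  intro x hx
  have h₁ := hle x hx
  have h₂ := hge x hx
  simp only [Pi.sub_apply] at h₁ h₂
  linarith

end IsViscositySolutionOn

theorem IsClassicalSolutionOn.apply_right_ne_zero (hw : IsClassicalSolutionOn β d r w (Ioo a b))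
    (hd : 0 < d) (hr : 0 < r) (hab : a < b) (hwc : ContinuousOn w (Icc a b)) (ha : w a = 0)
    (hderiv : HasDerivWithinAt w 1 (Icc a b) a) : w b ≠ 0 := by
  intro hb
  have hle := hwc.nonpos_of_isLocalMax ha.le hb.le fun x hx hmax => by
    have h2 := hmax.deriv_deriv_nonpos (hw x hx).1.continuousAt
    have heq := (hw x hx).2
    rw [hmax.deriv_eq_zero] at heq
    nlinarith
  have hmaxOn : IsLocalMaxOn w (Icc a b) a :=
    IsMaxOn.localize fun x hx => by simpa [ha] using hle x hx
  have hcone : b - a ∈ posTangentConeAt (Icc a b) a :=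
    mem_posTangentConeAt_of_segment_subset (by rw [add_sub_cancel, segment_eq_Icc hab.le])
  have := hmaxOn.hasFDerivWithinAt_nonpos hderiv hcone
  simp only [ContinuousLinearMap.toSpanSingleton_apply, smul_eq_mul, mul_one] at this
  linarith

theorem isClassicalSolutionOn_fst (hd : d ≠ 0) (hβ : Continuous β) {Y : ℝ → ℝ × ℝ}
    (hY : ∀ t ∈ Icc a b, HasDerivWithinAt Y (secondOrderSystem β d r t (Y t)) (Icc a b) t) :
    IsClassicalSolutionOn β d r (fun t => (Y t).1) (Ioo a b) := by
  have hYt : ∀ t ∈ Ioo a b, HasDerivAt Y (secondOrderSystem β d r t (Y t)) t := fun t ht =>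
    (hY t (Ioo_subset_Icc_self ht)).hasDerivAt (Icc_mem_nhds ht.1 ht.2)
  have h₁ : ∀ t ∈ Ioo a b, HasDerivAt (fun t => (Y t).1) (Y t).2 t := fun t ht => by
    have := hasFDerivAt_fst.comp_hasDerivAt t (hYt t ht)
    simp only [ContinuousLinearMap.coe_fst', secondOrderSystem_apply] at this
    exact this
  have h₂ : ∀ t ∈ Ioo a b,
      HasDerivAt (fun t => (Y t).2) (d⁻¹ * (r * (Y t).1 - β t * (Y t).2)) t := fun t ht => by
    have := hasFDerivAt_snd.comp_hasDerivAt t (hYt t ht)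
    simp only [ContinuousLinearMap.coe_snd', secondOrderSystem_apply] at this
    exact this
  have hYc : ContinuousOn Y (Ioo a b) := fun t ht => (hYt t ht).continuousAt.continuousWithinAt
  have hcont : ContinuousOn (fun t => d⁻¹ * (r * (Y t).1 - β t * (Y t).2)) (Ioo a b) := by
    fun_prop
  intro x hx
  have hx' : Ioo a b ∈ 𝓝 x := Ioo_mem_nhds hx.1 hx.2
  refine ⟨(contDiffOn_two_of_hasDerivAt isOpen_Ioo h₁ h₂ hcont).contDiffAt hx', ?_⟩
  have hd1 : deriv (fun t => (Y t).1) =ᶠ[𝓝 x] fun t => (Y t).2 :=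
    eventually_of_mem hx' fun t ht => (h₁ t ht).deriv
  rw [(h₁ x hx).deriv, hd1.deriv_eq, (h₂ x hx).deriv]
  field_simp
  ring

theorem exists_isClassicalSolutionOn_Ioo (hβ : Continuous β) (hd : 0 < d) (hr : 0 < r)
    {x₀ : ℝ} {s : Set ℝ} (hs : s ∈ 𝓝 x₀) :
    ∃ a b, a < x₀ ∧ x₀ < b ∧ Icc a b ⊆ s ∧ ∀ p q : ℝ, ∃ w : ℝ → ℝ,
      IsClassicalSolutionOn β d r w (Ioo a b) ∧ ContinuousOn w (Icc a b) ∧ w a = p ∧ w b = q := by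
  obtain ⟨a, b, hax, hxb, habs, hsol⟩ :=
    exists_Icc_forall_exists_hasDerivWithinAt_of_linear
      (continuous_secondOrderSystem hβ d r).continuousOn hs
  have hab : a < b := hax.trans hxb
  refine ⟨a, b, hax, hxb, habs, fun p q => ?_⟩
  obtain ⟨Y₀, hY₀a, hY₀⟩ := hsol (p, 0)
  obtain ⟨Y₁, hY₁a, hY₁⟩ := hsol (0, 1)
  have hY₁c : ContinuousOn (fun t => (Y₁ t).1) (Icc a b) :=
    continuous_fst.comp_continuousOn fun t ht => (hY₁ t ht).continuousWithinAt
  have hY₁' : HasDerivWithinAt (fun t => (Y₁ t).1) 1 (Icc a b) a := by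
    have := hasFDerivAt_fst.comp_hasDerivWithinAt a (hY₁ a (left_mem_Icc.2 hab.le))
    simp only [ContinuousLinearMap.coe_fst', secondOrderSystem_apply, hY₁a] at this
    exact this
  -- `(Y₁ ·).1` vanishes at `a` with slope `1`, so it cannot vanish at `b`: shooting works
  have hY₁b : (Y₁ b).1 ≠ 0 := (isClassicalSolutionOn_fst hd.ne' hβ hY₁).apply_right_ne_zero
    hd hr hab hY₁c (by simp [hY₁a]) hY₁'
  set c := (q - (Y₀ b).1) / (Y₁ b).1
  let Y := fun t => Y₀ t + c • Y₁ t
  have hY : ∀ t ∈ Icc a b, HasDerivWithinAt Y (secondOrderSystem β d r t (Y t)) (Icc a b) t :=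
    fun t ht => by
      have := (hY₀ t ht).add ((hY₁ t ht).const_smul c)
      rwa [← map_smul, ← map_add] at this
  refine ⟨fun t => (Y t).1, isClassicalSolutionOn_fst hd.ne' hβ hY,
    continuous_fst.comp_continuousOn fun t ht => (hY t ht).continuousWithinAt,
    by simp [Y, hY₀a, hY₁a], ?_⟩
  simp only [Y, Prod.fst_add, Prod.smul_fst, smul_eq_mul, c]
  field_simp
  ring
end

theorem viscosity_solution_C2_regularity_general
    (μ B s r k : ℝ) (hs : 0 < s) (hr : 0 < r)
    (α : ℝ → ℝ) (hα : Continuous α)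
    (U : Set ℝ) (hUopen : IsOpen U)
    (v : ℝ → ℝ) (hv : ContinuousOn v U)
    (hvisc : ∀ x₀ ∈ U, ∀ φ : ℝ → ℝ, ContDiff ℝ 2 φ →
      (IsLocalMin (fun x => v x - φ x) x₀ →
        (μ * B - α (max (k - x₀) 0)) * deriv φ x₀
          + s ^ 2 / 2 * deriv (deriv φ) x₀ - r * v x₀ ≤ 0) ∧
      (IsLocalMax (fun x => v x - φ x) x₀ →
        0 ≤ (μ * B - α (max (k - x₀) 0)) * deriv φ x₀
          + s ^ 2 / 2 * deriv (deriv φ) x₀ - r * v x₀)) :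
    ContDiffOn ℝ 2 v U := by
  have hvisc' : IsViscositySolutionOn (fun x => μ * B - α (max (k - x) 0)) (s ^ 2 / 2) r v U :=
    hvisc
  refine fun x₀ hx₀ => ContDiffAt.contDiffWithinAt ?_
  obtain ⟨a, b, hax, hxb, habU, hbvp⟩ := exists_isClassicalSolutionOn_Ioo
    (β := fun x => μ * B - α (max (k - x) 0)) (d := s ^ 2 / 2) (by fun_prop) (by positivity) hr
    (hUopen.mem_nhds hx₀)
  obtain ⟨w, hw, hwc, hwa, hwb⟩ := hbvp (v a) (v b)
  have hvw : EqOn v w (Icc a b) := hvisc'.eqOn_of_isClassicalSolutionOn hr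
    (Ioo_subset_Icc_self.trans habU) (hv.mono habU) hw hwc hwa.symm hwb.symm
  exact (hw x₀ ⟨hax, hxb⟩).1.congr_of_eventuallyEq
    (eventuallyEq_of_mem (Icc_mem_nhds hax hxb) hvw)

/-- C² regularity on the continuation region: a continuous viscosity solution of
the linear equation `(μB - α((k-x)⁺)) v' + (s²/2) v'' - r v = 0` on a nonempty
open interval `U` is twice continuously differentiable on `U`. -/
theorem viscosity_solution_C2_regularity
    (μ B s r k : ℝ) (hB : 0 < B) (hs : 0 < s) (hr : 0 < r)
    (α : ℝ → ℝ) (hα : Continuous α)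
    (U : Set ℝ) (hUopen : IsOpen U) (hUne : U.Nonempty) (hUconn : U.OrdConnected)
    (v : ℝ → ℝ) (hv : ContinuousOn v U)
    (hvisc : ∀ x₀ ∈ U, ∀ φ : ℝ → ℝ, ContDiff ℝ 2 φ →
      (IsLocalMin (fun x => v x - φ x) x₀ →
        (μ * B - α (max (k - x₀) 0)) * deriv φ x₀
          + s ^ 2 / 2 * deriv (deriv φ) x₀ - r * v x₀ ≤ 0) ∧
      (IsLocalMax (fun x => v x - φ x) x₀ →
        0 ≤ (μ * B - α (max (k - x₀) 0)) * deriv φ x₀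
          + s ^ 2 / 2 * deriv (deriv φ) x₀ - r * v x₀)) :
    ContDiffOn ℝ 2 v U :=
  viscosity_solution_C2_regularity_general μ B s r k hs hr α hα U hUopen v hv hvisc
end

section
/- Let c ≥ 0 and let v_i, v_j : ℝ → ℝ be differentiable functions such that v_i(y+t) ≥ v_i(y)+t and v_j(y+t) ≥ v_j(y)+t for all y ∈ ℝ and t > 0, v_i(x) ≥ v_j(x−c) for all x ∈ ℝ, and v_i(a) = v_j(a−c) for some a ∈ ℝ. If a is a left border of D_{v_i} = {x : v_i'(x) = 1}, then a − c is a left border of D_{v_j} = {x : v_j'(x) = 1}. -/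
open Set Filter

/-- If a differentiable function has derivative `1` on an open interval, then it has
slope one between any two points of the closed interval. -/
private lemma slope_one (f : ℝ → ℝ) (hf : Differentiable ℝ f) {p q x y : ℝ}
    (h : ∀ z ∈ Set.Ioo p q, deriv f z = 1)
    (hx : x ∈ Set.Icc p q) (hy : y ∈ Set.Icc p q) (hxy : x ≤ y) :
    f y - f x = y - x := by
  have hsub : Set.Ioo x y ⊆ Set.Ioo p q := Set.Ioo_subset_Ioo hx.1 hy.2
  set g : ℝ → ℝ := fun z => f z - z with hg
  have hgd : Differentiable ℝ g := hf.sub differentiable_id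
  have hderiv : ∀ z ∈ Set.Ioo x y, deriv g z = 0 := by
    intro z hz
    have hd : deriv g z = deriv f z - 1 :=
      ((hf z).hasDerivAt.sub (hasDerivAt_id z)).deriv
    rw [hd, h z (hsub hz)]; ring
  have hconv : Convex ℝ (Set.Icc x y) := convex_Icc x y
  have hmono : MonotoneOn g (Set.Icc x y) := by
    apply monotoneOn_of_deriv_nonneg hconv hgd.continuous.continuousOn
      hgd.differentiableOn
    intro z hz
    rw [interior_Icc] at hz
    rw [hderiv z hz]
  have hanti : AntitoneOn g (Set.Icc x y) := by
    apply antitoneOn_of_deriv_nonpos hconv hgd.continuous.continuousOn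
      hgd.differentiableOn
    intro z hz
    rw [interior_Icc] at hz
    rw [hderiv z hz]
  have h1 := hmono (Set.left_mem_Icc.2 hxy) (Set.right_mem_Icc.2 hxy) hxy
  have h2 := hanti (Set.left_mem_Icc.2 hxy) (Set.right_mem_Icc.2 hxy) hxy
  have hgeq : g x = g y := le_antisymm h1 h2
  simp only [hg] at hgeq
  linarith

/-- If `f` agrees with `fun z => k + z` on an open interval, then its derivative at any
point of that interval is `1`. -/
private lemma deriv_one_of_affine (f : ℝ → ℝ) {p q y k : ℝ}
    (h : ∀ z ∈ Set.Ioo p q, f z = k + z) (hy : y ∈ Set.Ioo p q) :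
    deriv f y = 1 := by
  have hev : f =ᶠ[nhds y] fun z => k + z := by
    filter_upwards [Ioo_mem_nhds hy.1 hy.2] with z hz using h z hz
  rw [hev.deriv_eq]
  exact ((hasDerivAt_id y).const_add k).deriv

/-- A point `x` is a left border of `E ⊆ ℝ` if some right neighbourhood
`(x, x+ε)` is contained in `E` and `x` is approached by a sequence of points
outside `E`. -/
def IsLeftBorder (E : Set ℝ) (x : ℝ) : Prop :=
  ∃ ε > (0 : ℝ), (Set.Ioo x (x + ε) ⊆ E) ∧
    ∃ xs : ℕ → ℝ, (∀ n, xs n ∉ E) ∧ Filter.Tendsto xs Filter.atTop (nhds x)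

/-- If `a` is a left border of the dividend region of `v_i` and `a` lies in the
switching region (`v_i(a) = v_j(a - c)`), then `a - c` is a left border of the
dividend region of `v_j`. -/
theorem left_border_propagates
    (c : ℝ) (hc : 0 ≤ c) (vi vj : ℝ → ℝ)
    (hdi : Differentiable ℝ vi) (hdj : Differentiable ℝ vj)
    (hgi : ∀ (y t : ℝ), 0 < t → vi y + t ≤ vi (y + t))
    (hgj : ∀ (y t : ℝ), 0 < t → vj y + t ≤ vj (y + t))
    (hge : ∀ x : ℝ, vj (x - c) ≤ vi x)
    (a : ℝ) (heq : vi a = vj (a - c))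
    (hlb : IsLeftBorder {x : ℝ | deriv vi x = 1} a) :
    IsLeftBorder {x : ℝ | deriv vj x = 1} (a - c) := by
  obtain ⟨ε, hε, hsub, xs, hxs, hxst⟩ := hlb
  have hderi : ∀ z ∈ Set.Ioo a (a + ε), deriv vi z = 1 := fun z hz => hsub hz
  -- On (a, a+ε) the function vi is affine with slope 1
  have hviA : ∀ x ∈ Set.Ioo a (a + ε), vi x = vi a + (x - a) := by
    intro x hx
    have := slope_one vi hdi hderi (Set.left_mem_Icc.2 (by linarith [hx.2]))
      ⟨hx.1.le, hx.2.le⟩ hx.1.le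
    linarith
  -- hence vj is affine with slope 1 on (a-c, a-c+ε)
  have hvjA : ∀ x ∈ Set.Ioo a (a + ε), vj (x - c) = vj (a - c) + (x - a) := by
    intro x hx
    have hub : vj (x - c) ≤ vj (a - c) + (x - a) := by
      have := hge x
      have := hviA x hx
      linarith
    have hlbd : vj (a - c) + (x - a) ≤ vj (x - c) := by
      have h1 := hgj (a - c) (x - a) (by linarith [hx.1])
      have he : a - c + (x - a) = x - c := by ring
      rw [he] at h1
      exact h1
    linarith
  refine ⟨ε, hε, ?_, ?_⟩
  · -- (a-c, a-c+ε) ⊆ {deriv vj = 1}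
    intro y hy
    have hk : ∀ z ∈ Set.Ioo (a - c) (a - c + ε), vj z = (vj (a - c) - (a - c)) + z := by
      intro z hz
      have hx : z + c ∈ Set.Ioo a (a + ε) := ⟨by linarith [hz.1], by linarith [hz.2]⟩
      have := hvjA (z + c) hx
      have he : z + c - c = z := by ring
      rw [he] at this
      linarith
    exact deriv_one_of_affine vj hk hy
  · -- the approaching sequence
    have key : ∀ δ : ℝ, 0 < δ → ∃ y, |y - (a - c)| < δ ∧ deriv vj y ≠ 1 := by
      intro δ hδ
      by_contra hcon
      push_neg at hcon
      -- then deriv vj = 1 on (a-c-δ, a-c+δ)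
      have hderj : ∀ z ∈ Set.Ioo (a - c - δ) (a - c + δ), deriv vj z = 1 := by
        intro z hz
        exact hcon z (by rw [abs_lt]; constructor <;> [linarith [hz.1]; linarith [hz.2]])
      set m := min δ ε with hm
      have hmpos : 0 < m := lt_min hδ hε
      have hmδ : m ≤ δ := min_le_left _ _
      have hmε : m ≤ ε := min_le_right _ _
      -- vi is affine with slope 1 on (a - m, a + m)
      have haff : ∀ x ∈ Set.Ioo (a - m) (a + m), vi x = (vi a - a) + x := by
        intro x hx
        rcases lt_trichotomy x a with hlt | heqx | hgt
        · -- left of a: squeeze between growth and switching bounds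
          have hub : vi x + (a - x) ≤ vi a := by
            have := hgi x (a - x) (by linarith)
            have he : x + (a - x) = a := by ring
            rw [he] at this
            exact this
          have hvjx : vj (a - c) - vj (x - c) = (a - c) - (x - c) := by
            apply slope_one vj hdj hderj
            · exact ⟨by linarith [hx.1], by linarith [hx.2]⟩
            · exact ⟨by linarith, by linarith⟩
            · linarith
          have hlbd : vj (x - c) ≤ vi x := hge x
          -- vj (x - c) = vi a + (x - a)
          have : vj (x - c) = vi a + (x - a) := by
            rw [heq]; linarith
          linarith
        · subst heqx; ring
        · have hx' : x ∈ Set.Ioo a (a + ε) := by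
            constructor
            · exact hgt
            · have := min_le_right δ ε
              have := hx.2
              linarith
          have := hviA x hx'
          linarith
      -- so deriv vi = 1 near a, contradicting the sequence xs
      have hevent : ∀ᶠ n in atTop, xs n ∈ Set.Ioo (a - m) (a + m) := by
        have := hxst (Ioo_mem_nhds (by linarith) (by linarith) :
          Set.Ioo (a - m) (a + m) ∈ nhds a)
        exact this
      obtain ⟨n, hn⟩ := hevent.exists
      exact hxs n (deriv_one_of_affine vi haff hn)
    choose ys hys hys' using fun n : ℕ => key (1 / (n + 1)) (by positivity)
    refine ⟨ys, fun n => hys' n, ?_⟩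
    rw [tendsto_iff_dist_tendsto_zero]
    apply squeeze_zero (fun n => dist_nonneg) (fun n => (hys n).le)
    exact tendsto_one_div_add_atTop_nhds_zero_nat
end

section
/- Let r > 0, μ > 0, B > 0, s > 0, k ∈ ℝ, and let α : ℝ → ℝ be differentiable with α(0) = 0 and α'(y) > r for all y ∈ ℝ. Let a ∈ ℝ, δ > 0, ε > 0 and let v : ℝ → ℝ be continuously differentiable on (a−δ, a+ε) with v'(x) ≥ 1 there. Assume: (1) v(x) = v(a) + (x − a) for all x ∈ [a, a+ε); (2) v is twice differentiable on (a−δ, a) and satisfies (μB − α((k−x)⁺))·v'(x) + (s²/2)·v''(x) − r·v(x) = 0 for all x ∈ (a−δ, a); (3) r·v(x) ≥ μB − α((k−x)⁺) for all x ∈ [a, a+ε). Then a ≥ k and r·v(a) = μB. -/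
/-!
Just left of `a` the HJB equation says that the residual
`F x = (μB - α((k-x)⁺)) v'(x) - r v(x)` equals `-(s²/2) v''(x)`. Since `v' ≥ 1 = v'(a)`
there, the mean value theorem gives points `c ↑ a` with `v''(c) ≤ 0`, so `F(a) ≥ 0` by
continuity; together with the supersolution inequality at `a` this forces
`r v(a) = μB - α((k-a)⁺)`. If `a < k`, moving right along the affine part increases `r v`
at rate `r`, while `μB - α((k-x)⁺)` increases at rate `α' > r`, contradicting the
supersolution inequality; hence `a ≥ k` and `α((k-a)⁺) = α(0) = 0`.
-/

open Set Filter Topology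

lemma deriv_eq_one_of_eq_add_sub_on_Ico {v : ℝ → ℝ} {a ε : ℝ} (hε : 0 < ε)
    (hv : DifferentiableAt ℝ v a) (haff : ∀ x ∈ Ico a (a + ε), v x = v a + (x - a)) :
    deriv v a = 1 := by
  have haffine : HasDerivWithinAt v 1 (Ici a) a := by
    refine (((hasDerivAt_id a).sub_const a).const_add (v a)).hasDerivWithinAt
      |>.congr_of_eventuallyEq ?_ (by simp)
    filter_upwards [Ico_mem_nhdsGE (by linarith : a < a + ε)] with x hx using haff x hx
  exact (uniqueDiffOn_Ici a a self_mem_Ici).eq_deriv _ hv.hasDerivAt.hasDerivWithinAt haffine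

lemma frequently_deriv_nonpos_nhdsLT {g : ℝ → ℝ} {a δ : ℝ} (hδ : 0 < δ)
    (hg : ContinuousOn g (Ioc (a - δ) a)) (hg' : DifferentiableOn ℝ g (Ioo (a - δ) a))
    (hmin : ∀ x ∈ Ioo (a - δ) a, g a ≤ g x) :
    ∃ᶠ c in 𝓝[<] a, deriv g c ≤ 0 := by
  refine (nhdsLT_basis a).frequently_iff.2 fun b hb => ?_
  set x := max b (a - δ / 2)
  have hx : x ∈ Ioo (a - δ) a := ⟨by grind, by grind⟩
  obtain ⟨c, hc, hslope⟩ := exists_deriv_eq_slope g hx.2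
    (hg.mono (Icc_subset_Ioc_iff hx.2.le |>.2 ⟨hx.1, le_rfl⟩))
    (hg'.mono (Ioo_subset_Ioo_left hx.1.le))
  refine ⟨c, ⟨(le_max_left _ _).trans_lt hc.1, hc.2⟩, ?_⟩
  rw [hslope]
  exact div_nonpos_of_nonpos_of_nonneg (by linarith [hmin x hx]) (by linarith [hx.2])

lemma mul_le_mul_deriv_of_ode_on_left {b v : ℝ → ℝ} {U : Set ℝ} {a δ q r : ℝ}
    (hδ : 0 < δ) (hq : 0 ≤ q) (hb : ContinuousAt b a) (hU : IsOpen U)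
    (hv : ContDiffOn ℝ 1 v U) (haU : Ioc (a - δ) a ⊆ U) (hmin : ∀ x ∈ Ioo (a - δ) a, deriv v a ≤ deriv v x)
    (hode : ∀ x ∈ Ioo (a - δ) a, DifferentiableAt ℝ (deriv v) x ∧
      b x * deriv v x + q * deriv (deriv v) x - r * v x = 0) :
    r * v a ≤ b a * deriv v a := by
  have haU' : a ∈ U := haU ⟨by linarith, le_rfl⟩
  have hv'U : ContinuousOn (deriv v) U := hv.continuousOn_deriv_of_isOpen hU le_rfl
  have hF : ContinuousAt (fun x => b x * deriv v x - r * v x) a :=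
    (hb.mul (hv'U.continuousAt (hU.mem_nhds haU'))).sub <| continuousAt_const.mul <|
      ((hv.differentiableOn one_ne_zero).differentiableAt (hU.mem_nhds haU')).continuousAt
  have hconcave : ∃ᶠ c in 𝓝[<] a, deriv (deriv v) c ≤ 0 :=
    frequently_deriv_nonpos_nhdsLT hδ (hv'U.mono haU)
      (fun x hx => (hode x hx).1.differentiableWithinAt) hmin
  have hresidual : ∃ᶠ c in 𝓝[<] a, b c * deriv v c - r * v c ∈ Ici 0 := by
    refine (hconcave.and_eventually (Ioo_mem_nhdsLT (by linarith : a - δ < a))).mono ?_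
    rintro c ⟨hc, hcδ⟩
    have hq'' := mul_nonpos_of_nonneg_of_nonpos hq hc
    rw [mem_Ici]
    linarith [(hode c hcδ).2]
  have hFa : 0 ≤ b a * deriv v a - r * v a :=
    isClosed_Ici.mem_of_frequently_of_tendsto hresidual (hF.tendsto.mono_left nhdsWithin_le_nhds)
  linarith

lemma le_of_forall_Ico_sub_le_mul {α : ℝ → ℝ} {r k a ε : ℝ} (hα : Differentiable ℝ α)
    (hα' : ∀ y, r < deriv α y) (hε : 0 < ε)
    (h : ∀ x ∈ Ico a (a + ε), α (max (k - a) 0) - α (max (k - x) 0) ≤ r * (x - a)) :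
    k ≤ a := by
  by_contra! hak
  set x := a + min (k - a) ε / 2
  have hxk : x < k := by grind
  have hax : a < x := by grind
  have hx := h x ⟨hax.le, by grind⟩
  rw [max_eq_left (by linarith), max_eq_left (by linarith)] at hx
  have := mul_sub_lt_image_sub_of_lt_deriv hα hα' (by linarith : k - x < k - a)
  rw [show k - a - (k - x) = x - a by ring] at this
  linarith

theorem left_border_dividend_region_location_general
    (r μ B s k : ℝ)
    (α : ℝ → ℝ) (hα : Differentiable ℝ α) (hα0 : α 0 = 0)
    (hα' : ∀ y : ℝ, r < deriv α y)
    (a δ ε : ℝ) (hδ : 0 < δ) (hε : 0 < ε)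
    (v : ℝ → ℝ)
    (hvC1 : ContDiffOn ℝ 1 v (Set.Ioo (a - δ) (a + ε)))
    (hv' : ∀ x ∈ Set.Ioo (a - δ) (a + ε), 1 ≤ deriv v x)
    (haff : ∀ x ∈ Set.Ico a (a + ε), v x = v a + (x - a))
    (hode : ∀ x ∈ Set.Ioo (a - δ) a,
      DifferentiableAt ℝ (deriv v) x ∧
      (μ * B - α (max (k - x) 0)) * deriv v x
        + s ^ 2 / 2 * deriv (deriv v) x - r * v x = 0)
    (hsuper : ∀ x ∈ Set.Ico a (a + ε), μ * B - α (max (k - x) 0) ≤ r * v x) :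
    k ≤ a ∧ r * v a = μ * B := by
  have ha : a ∈ Ioo (a - δ) (a + ε) := ⟨by linarith, by linarith⟩
  have hv'a : deriv v a = 1 := deriv_eq_one_of_eq_add_sub_on_Ico hε
    ((hvC1.differentiableOn one_ne_zero).differentiableAt (isOpen_Ioo.mem_nhds ha)) haff
  have hsub : r * v a ≤ (μ * B - α (max (k - a) 0)) * deriv v a :=
    mul_le_mul_deriv_of_ode_on_left hδ (by positivity)
      (by have := hα.continuous; fun_prop) isOpen_Ioo hvC1
      (Ioc_subset_Ioo_right (by linarith))
      (fun x hx => hv'a ▸ hv' x (Ioo_subset_Ioo_right (by linarith) hx)) hode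
  have hva : r * v a = μ * B - α (max (k - a) 0) := by
    rw [hv'a, mul_one] at hsub
    linarith [hsuper a (left_mem_Ico.2 (by linarith))]
  have hka : k ≤ a := le_of_forall_Ico_sub_le_mul hα hα' hε fun x hx => by
    have hx' := hsuper x hx
    rw [haff x hx, mul_add] at hx'
    linarith
  refine ⟨hka, ?_⟩
  rwa [max_eq_right (by linarith), hα0, sub_zero] at hva

/-- First case of the lemma locating left borders of the dividend region: if `a`
is a left border of the dividend region with the continuation region just to its
left (where the HJB ODE holds), then `a ≥ k` and `r v(a) = μ B`. -/
theorem left_border_dividend_region_location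
    (r μ B s k : ℝ) (hr : 0 < r) (hμ : 0 < μ) (hB : 0 < B) (hs : 0 < s)
    (α : ℝ → ℝ) (hα : Differentiable ℝ α) (hα0 : α 0 = 0)
    (hα' : ∀ y : ℝ, r < deriv α y)
    (a δ ε : ℝ) (hδ : 0 < δ) (hε : 0 < ε)
    (v : ℝ → ℝ)
    (hvC1 : ContDiffOn ℝ 1 v (Set.Ioo (a - δ) (a + ε)))
    (hv' : ∀ x ∈ Set.Ioo (a - δ) (a + ε), 1 ≤ deriv v x)
    (haff : ∀ x ∈ Set.Ico a (a + ε), v x = v a + (x - a))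
    (hode : ∀ x ∈ Set.Ioo (a - δ) a,
      DifferentiableAt ℝ (deriv v) x ∧
      (μ * B - α (max (k - x) 0)) * deriv v x
        + s ^ 2 / 2 * deriv (deriv v) x - r * v x = 0)
    (hsuper : ∀ x ∈ Set.Ico a (a + ε), μ * B - α (max (k - x) 0) ≤ r * v x) :
    k ≤ a ∧ r * v a = μ * B :=
  left_border_dividend_region_location_general r μ B s k α hα hα0 hα' a δ ε hδ hε v hvC1 hv' haff
    hode hsuper
end

section
/- Let N ≥ 1 be an integer and let k_1 > 0, h > 0 with k_i = k_1 + (i−1)h for i ∈ {1,…,N}. Let r > 0, μ > 0, γ > 0, let β : ℝ → ℝ be nondecreasing with β̄ = β(k_N), and let α : ℝ → ℝ be differentiable with α(0) = 0 and α'(y) > r for all y ∈ ℝ. Define φ_i(x) = x − γ·k_i + μ·β̄/r. Then for all i, j ∈ {1,…,N} and all x ≥ γ·k_i: (a) r·φ_i(x) − (μ·β(k_i) − α((k_i − x)⁺)) ≥ 0 (i.e. −L_i φ_i(x) ≥ 0, since φ_i is affine with φ_i' = 1 and φ_i'' = 0); and (b) φ_i(x) − φ_j(x − γ·|k_i − k_j|)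 ≥ 0. -/
/-- The affine functions `φ_i(x) = x - γ k_i + μ β̄ / r` are classical
supersolutions of the HJB variational system: `-L_i φ_i ≥ 0` (part (a), since
`φ_i' = 1` and `φ_i'' = 0`) and `φ_i(x) ≥ φ_j(x - γ |k i - k j|)` (part (b)). -/
theorem affine_supersolution
    (N : ℕ) (hN : 1 ≤ N) (k1 h : ℝ) (hk1 : 0 < k1) (hh : 0 < h)
    (r μ γ : ℝ) (hr : 0 < r) (hμ : 0 < μ) (hγ : 0 < γ)
    (β : ℝ → ℝ) (hβ : Monotone β)
    (α : ℝ → ℝ) (hα : Differentiable ℝ α)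
    (hα0 : α 0 = 0) (hα' : ∀ y : ℝ, r < deriv α y)
    (k : ℕ → ℝ) (hk : ∀ i : ℕ, k i = k1 + ((i : ℝ) - 1) * h)
    (φ : ℕ → ℝ → ℝ) (hφ : ∀ (i : ℕ) (x : ℝ), φ i x = x - γ * k i + μ * β (k N) / r) :
    ∀ i j : ℕ, 1 ≤ i → i ≤ N → 1 ≤ j → j ≤ N → ∀ x : ℝ, γ * k i ≤ x →
      (0 ≤ r * φ i x - (μ * β (k i) - α (max (k i - x) 0))) ∧
      (0 ≤ φ i x - φ j (x - γ * |k i - k j|)) := by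
  have hαmono : StrictMono α :=
    strictMono_of_deriv_pos (fun y => lt_trans hr (hα' y))
  intro i j hi hiN hj hjN x hx
  constructor
  · -- part (a)
    have hkiN : k i ≤ k N := by
      rw [hk i, hk N]
      have : (i : ℝ) ≤ (N : ℝ) := Nat.cast_le.mpr hiN
      nlinarith
    have hβle : μ * β (k i) ≤ μ * β (k N) := by
      exact mul_le_mul_of_nonneg_left (hβ hkiN) hμ.le
    have hαpos : 0 ≤ α (max (k i - x) 0) := by
      have := hαmono.monotone (le_max_right (k i - x) 0)
      rwa [hα0] at this
    have h1 : r * φ i x = r * x - r * (γ * k i) + μ * β (k N) := by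
      rw [hφ]; field_simp
    have h2 : 0 ≤ r * x - r * (γ * k i) := by nlinarith
    linarith
  · -- part (b)
    rw [hφ, hφ]
    have habs : k i - k j ≤ |k i - k j| := le_abs_self _
    nlinarith
end
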